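/- (Main theorem, measure-theoretic form.) Let D ⊆ [0,1] be almost full and let f : D → ℝ be tag-Riemann integrable with integral A. Then there exists a function g : [0,1] → ℝ that is Lebesgue integrable on [0,1] with ∫₀¹ g(x) dx = A, such that the set {x ∈ D : f(x) = g(x)} is almost full (in particular, f agrees with g on a set of full Lebesgue outer measure). -/

import Mathlib

open MeasureTheory Filter Set

noncomputable section

/-- A sequence of functions on `[0,1]` is *regular* if each member is continuous and
nonnegative on `[0,1]` and has integral over `[0,1]` strictly less than `2⁻ⁿ`. -/
def RegularSeq (h : ℕ → ℝ → ℝ) : Prop :=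
  ∀ n : ℕ, ContinuousOn (h n) (Set.Icc 0 1) ∧
    (∀ x ∈ Set.Icc (0:ℝ) 1, 0 ≤ h n x) ∧
    (∫ x in (0:ℝ)..1, h n x) < (1/2 : ℝ) ^ n

/-- The set `Ω(𝔥)` of points of `[0,1]` at which the partial sums of `∑ hₙ(x)` are
bounded above. -/
def Omega (h : ℕ → ℝ → ℝ) : Set ℝ :=
  {x ∈ Set.Icc (0:ℝ) 1 | ∃ γ : ℝ, ∀ m : ℕ, ∑ n ∈ Finset.range (m+1), h n x ≤ γ}

/-- A subset `X ⊆ [0,1]` is *almost full* if `Ω(𝔥) ⊆ X` for some regular sequence `𝔥`. -/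
def AlmostFull (X : Set ℝ) : Prop :=
  ∃ h : ℕ → ℝ → ℝ, RegularSeq h ∧ Omega h ⊆ X

/-- A *tag system of depth `m` for `D`*: a choice of a point of `I_{l,m} ∩ D` for each
dyadic interval `I_{l,m} = (l·2⁻ᵐ, (l+1)·2⁻ᵐ)`, `0 ≤ l < 2ᵐ`. -/
def IsTagSystem (D : Set ℝ) (m : ℕ) (ζ : ℕ → ℝ) : Prop :=
  ∀ l : ℕ, l < 2^m → ζ l ∈ Set.Ioo ((l : ℝ) / 2^m) (((l : ℝ) + 1) / 2^m) ∩ D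

/-- The Riemann sum of `f` associated with a tag system of depth `m`. -/
def RiemannSum (f : ℝ → ℝ) (m : ℕ) (ζ : ℕ → ℝ) : ℝ :=
  ∑ l ∈ Finset.range (2^m), (1/2 : ℝ)^m * f (ζ l)

/-- `f : D → ℝ` is *tag-Riemann integrable with integral `A`* if the Riemann sums over
all tag systems of sufficiently large depth are arbitrarily close to `A`. -/
def TagRiemannIntegrable (D : Set ℝ) (f : ℝ → ℝ) (A : ℝ) : Prop :=
  ∀ ε > (0:ℝ), ∃ M : ℕ, ∀ m ≥ M, ∀ ζ : ℕ → ℝ, IsTagSystem D m ζ →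
    |RiemannSum f m ζ - A| < ε



/-- index of the depth-`m` dyadic cell containing `x`. -/
def didx (m : ℕ) (x : ℝ) : ℕ := ⌊(2:ℝ)^m * x⌋₊

/-- step function at depth `m` with values `a`. -/
def stepf (m : ℕ) (a : ℕ → ℝ) (x : ℝ) : ℝ := a (didx m x)

lemma two_pow_pos (m : ℕ) : (0:ℝ) < 2^m := by positivity

lemma cell_len (m l : ℕ) : ((l : ℝ) + 1) / 2^m - (l : ℝ) / 2^m = (1/2 : ℝ)^m := by
  rw [div_sub_div_same, div_pow]
  norm_num

lemma didx_le (m : ℕ) {x : ℝ} (hx : 0 ≤ x) : ((didx m x : ℝ)) / 2^m ≤ x := by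
  rw [div_le_iff₀ (two_pow_pos m)]
  have := Nat.floor_le (by positivity : (0:ℝ) ≤ (2:ℝ)^m * x)
  simpa [didx, mul_comm] using this

lemma lt_didx_succ (m : ℕ) (x : ℝ) : x < ((didx m x : ℝ) + 1) / 2^m := by
  rw [lt_div_iff₀ (two_pow_pos m)]
  have := Nat.lt_floor_add_one ((2:ℝ)^m * x)
  simpa [didx, mul_comm] using this

lemma didx_lt (m : ℕ) {x : ℝ} (hx0 : 0 ≤ x) (hx1 : x < 1) : didx m x < 2^m := by
  have h : (2:ℝ)^m * x < (2:ℝ)^m := by nlinarith [two_pow_pos m]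
  have h2 : ((2^m : ℕ) : ℝ) = (2:ℝ)^m := by push_cast; ring
  exact Nat.floor_lt (by positivity) |>.2 (by rw [h2]; exact h)

lemma didx_le_pow (m : ℕ) {x : ℝ} (hx0 : 0 ≤ x) (hx1 : x ≤ 1) : didx m x ≤ 2^m := by
  have h : (2:ℝ)^m * x ≤ ((2^m : ℕ) : ℝ) := by push_cast; nlinarith [two_pow_pos m]
  have h2 := Nat.floor_le_floor h
  rwa [Nat.floor_natCast] at h2

lemma didx_mem_Ico (m : ℕ) {x : ℝ} (hx : 0 ≤ x) :
    x ∈ Set.Ico ((didx m x : ℝ) / 2^m) (((didx m x : ℝ) + 1) / 2^m) :=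
  ⟨didx_le m hx, lt_didx_succ m x⟩

lemma didx_eq_of_mem {m l : ℕ} {x : ℝ}
    (hx : x ∈ Set.Ico ((l : ℝ) / 2^m) (((l : ℝ) + 1) / 2^m)) : didx m x = l := by
  have h1 : (l:ℝ) ≤ (2:ℝ)^m * x := by
    have := (div_le_iff₀ (two_pow_pos m)).1 hx.1
    linarith [this]
  have h2 : (2:ℝ)^m * x < (l:ℝ) + 1 := by
    have := (lt_div_iff₀ (two_pow_pos m)).1 hx.2
    linarith [this]
  have h0 : (0:ℝ) ≤ (2:ℝ)^m * x := le_trans (Nat.cast_nonneg l) h1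
  have : ⌊(2:ℝ)^m * x⌋₊ = l := by
    rw [Nat.floor_eq_iff h0]
    exact ⟨by exact_mod_cast h1, by exact_mod_cast h2⟩
  simpa [didx] using this

lemma measurable_stepf (m : ℕ) (a : ℕ → ℝ) : Measurable (stepf m a) :=
  (measurable_from_top (f := a)).comp (Nat.measurable_floor.comp (measurable_const.mul measurable_id))

/-- the union of dyadic cells of depth m is `Ico 0 1`. -/
lemma biUnion_cells (m : ℕ) :
    (⋃ l ∈ Finset.range (2^m), Set.Ico ((l : ℝ) / 2^m) (((l : ℝ) + 1) / 2^m)) = Set.Ico (0:ℝ) 1 := by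
  ext x
  simp only [Set.mem_iUnion, Finset.mem_range, Set.mem_Ico]
  constructor
  · rintro ⟨l, hl, h1, h2⟩
    constructor
    · have : (0:ℝ) ≤ (l:ℝ) / 2^m := by positivity
      linarith
    · have hle : ((l:ℝ) + 1) / 2^m ≤ 1 := by
        rw [div_le_one (two_pow_pos m)]
        have : (l:ℝ) + 1 ≤ ((2^m : ℕ) : ℝ) := by exact_mod_cast Nat.succ_le_of_lt hl
        exact this.trans_eq (by push_cast; ring)
      linarith
  · rintro ⟨h0, h1⟩
    exact ⟨didx m x, didx_lt m h0 h1, didx_le m h0, lt_didx_succ m x⟩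

lemma cell_subset_Icc {m l : ℕ} (hl : l < 2^m) :
    Set.Ico ((l : ℝ) / 2^m) (((l : ℝ) + 1) / 2^m) ⊆ Set.Icc (0:ℝ) 1 := by
  intro x hx
  constructor
  · have : (0:ℝ) ≤ (l:ℝ)/2^m := by positivity
    linarith [hx.1]
  · have hle : ((l:ℝ) + 1) / 2^m ≤ 1 := by
      rw [div_le_one (two_pow_pos m)]
      have : (l:ℝ) + 1 ≤ ((2^m : ℕ) : ℝ) := by exact_mod_cast Nat.succ_le_of_lt hl
      exact this.trans_eq (by push_cast; ring)
    linarith [hx.2]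

lemma integrableOn_stepf (m : ℕ) (a : ℕ → ℝ) :
    IntegrableOn (stepf m a) (Set.Icc (0:ℝ) 1) := by
  set C : ℝ := ∑ l ∈ Finset.range (2^m + 1), |a l| with hCdef
  have hC : ∀ l ≤ 2^m, |a l| ≤ C :=
    fun l hl => Finset.single_le_sum (f := fun l => |a l|) (fun i _ => abs_nonneg _)
      (Finset.mem_range.2 (Nat.lt_succ_of_le hl))
  refine Integrable.mono' (g := fun _ => C) (integrableOn_const ?_)
    ((measurable_stepf m a).aestronglyMeasurable) ?_
  · rw [Real.volume_Icc]; norm_num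
  · refine (ae_restrict_iff' measurableSet_Icc).2 (Filter.Eventually.of_forall fun x hx => ?_)
    exact hC _ (didx_le_pow m hx.1 hx.2)

lemma integral_stepf (m : ℕ) (a : ℕ → ℝ) :
    ∫ x in Set.Icc (0:ℝ) 1, stepf m a x = ∑ l ∈ Finset.range (2^m), (1/2 : ℝ)^m * a l := by
  have hIcoIcc : ∫ x in Set.Icc (0:ℝ) 1, stepf m a x = ∫ x in Set.Ico (0:ℝ) 1, stepf m a x :=
    (setIntegral_congr_set Ico_ae_eq_Icc).symm
  rw [hIcoIcc, ← biUnion_cells m]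
  rw [integral_biUnion_finset (Finset.range (2^m)) (fun l _ => measurableSet_Ico) ?_ ?_]
  · refine Finset.sum_congr rfl fun l hl => ?_
    have hconst : ∀ x ∈ Set.Ico ((l : ℝ) / 2^m) (((l : ℝ) + 1) / 2^m), stepf m a x = a l := by
      intro x hx; simp [stepf, didx_eq_of_mem hx]
    rw [setIntegral_congr_fun measurableSet_Ico hconst, setIntegral_const, measureReal_def, Real.volume_Ico,
      smul_eq_mul]
    rw [cell_len m l, ENNReal.toReal_ofReal (by positivity)]
  · -- pairwise disjoint
    intro i hi j hj hij
    apply Set.disjoint_left.2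
    intro x hxi hxj
    exact hij (by rw [← didx_eq_of_mem hxi, ← didx_eq_of_mem hxj])
  · intro l hl
    exact (integrableOn_stepf m a).mono_set (cell_subset_Icc (Finset.mem_range.1 hl))
section PartB
open MeasureTheory Filter Set


lemma regular_integrableOn {h : ℕ → ℝ → ℝ} (hh : RegularSeq h) (n : ℕ) :
    IntegrableOn (h n) (Set.Icc (0:ℝ) 1) :=
  (hh n).1.integrableOn_Icc

lemma regular_setIntegral_lt {h : ℕ → ℝ → ℝ} (hh : RegularSeq h) (n : ℕ) :
    ∫ x in Set.Icc (0:ℝ) 1, h n x < (1/2 : ℝ)^n := by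
  have := (hh n).2.2
  rwa [intervalIntegral.integral_of_le (by norm_num : (0:ℝ) ≤ 1),
    ← integral_Icc_eq_integral_Ioc] at this

/-- a.e. point of `[0,1]` lies in `Omega h`. -/
lemma omega_ae {h : ℕ → ℝ → ℝ} (hh : RegularSeq h) :
    ∀ᵐ x ∂(volume.restrict (Set.Icc (0:ℝ) 1)), x ∈ Omega h := by
  set μ := volume.restrict (Set.Icc (0:ℝ) 1) with hμ
  have haem : ∀ n, AEMeasurable (fun x => ENNReal.ofReal (h n x)) μ := fun n =>
    (ENNReal.measurable_ofReal.comp_aemeasurable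
      (((hh n).1.aemeasurable measurableSet_Icc)))
  have hlin : (∫⁻ x, ∑' n, ENNReal.ofReal (h n x) ∂μ) ≤ 2 := by
    rw [MeasureTheory.lintegral_tsum haem]
    have hval : ∀ n, (∫⁻ x, ENNReal.ofReal (h n x) ∂μ) ≤ ENNReal.ofReal ((1/2:ℝ)^n) := by
      intro n
      rw [← MeasureTheory.ofReal_integral_eq_lintegral_ofReal (regular_integrableOn hh n)
        ((ae_restrict_iff' measurableSet_Icc).2 (Filter.Eventually.of_forall fun x hx => (hh n).2.1 x hx))]
      exact ENNReal.ofReal_le_ofReal (le_of_lt (regular_setIntegral_lt hh n))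
    calc (∑' n, ∫⁻ x, ENNReal.ofReal (h n x) ∂μ) ≤ ∑' n, ENNReal.ofReal ((1/2:ℝ)^n) :=
          ENNReal.tsum_le_tsum hval
      _ = ENNReal.ofReal (∑' n, (1/2:ℝ)^n) :=
          (ENNReal.ofReal_tsum_of_nonneg (fun n => by positivity)
            (summable_geometric_of_lt_one (by norm_num) (by norm_num))).symm
      _ = ENNReal.ofReal 2 := by rw [tsum_geometric_of_lt_one (by norm_num) (by norm_num)]; norm_num
      _ ≤ 2 := by norm_num
  have hfin : ∀ᵐ x ∂μ, (∑' n, ENNReal.ofReal (h n x)) < ⊤ :=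
    MeasureTheory.ae_lt_top' (AEMeasurable.ennreal_tsum haem) (lt_of_le_of_lt hlin (by norm_num)).ne
  have hmem : ∀ᵐ x ∂μ, x ∈ Set.Icc (0:ℝ) 1 := ae_restrict_mem measurableSet_Icc
  filter_upwards [hfin, hmem] with x hx hxm
  refine ⟨hxm, (∑' n, ENNReal.ofReal (h n x)).toReal, fun m => ?_⟩
  have hofsum : ENNReal.ofReal (∑ n ∈ Finset.range (m+1), h n x)
      = ∑ n ∈ Finset.range (m+1), ENNReal.ofReal (h n x) :=
    ENNReal.ofReal_sum_of_nonneg (fun n _ => (hh n).2.1 x hxm)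
  have hle : (∑ n ∈ Finset.range (m+1), ENNReal.ofReal (h n x)) ≤ ∑' n, ENNReal.ofReal (h n x) :=
    ENNReal.sum_le_tsum _
  have := ENNReal.toReal_mono hx.ne (hofsum ▸ hle)
  rwa [ENNReal.toReal_ofReal (Finset.sum_nonneg fun n _ => (hh n).2.1 x hxm)] at this
/-- a null set capturing the complement of `Omega h` in `[0,1]`. -/
lemma omega_null {h : ℕ → ℝ → ℝ} (hh : RegularSeq h) :
    volume ({x | ¬ x ∈ Omega h} ∩ Set.Icc (0:ℝ) 1) = 0 := by
  have := omega_ae hh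
  rw [MeasureTheory.ae_iff, Measure.restrict_apply' measurableSet_Icc] at this
  exact this

lemma omega_subset_of_null {h : ℕ → ℝ → ℝ} :
    Set.Icc (0:ℝ) 1 \ ({x | ¬ x ∈ Omega h} ∩ Set.Icc (0:ℝ) 1) ⊆ Omega h := by
  intro x hx
  by_contra hc
  exact hx.2 ⟨hc, hx.1⟩

lemma volume_ge_of_omega_subset {h : ℕ → ℝ → ℝ} (hh : RegularSeq h) {X : Set ℝ}
    (hX : Omega h ⊆ X) : 1 ≤ volume X := by
  have h1 : volume (Set.Icc (0:ℝ) 1 \ ({x | ¬ x ∈ Omega h} ∩ Set.Icc (0:ℝ) 1)) = 1 := by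
    rw [measure_diff_null (omega_null hh), Real.volume_Icc]; norm_num
  calc (1:ENNReal) = _ := h1.symm
    _ ≤ volume X := measure_mono (omega_subset_of_null.trans hX)

lemma omega_meets {h : ℕ → ℝ → ℝ} (hh : RegularSeq h) {S : Set ℝ}
    (hS : MeasurableSet S) (hSsub : S ⊆ Set.Icc (0:ℝ) 1) (hSpos : volume S ≠ 0) :
    (S ∩ Omega h).Nonempty := by
  have h2 : volume (S \ ({x | ¬ x ∈ Omega h} ∩ Set.Icc (0:ℝ) 1)) = volume S :=
    measure_diff_null (omega_null hh)
  have hne : (S \ ({x | ¬ x ∈ Omega h} ∩ Set.Icc (0:ℝ) 1)).Nonempty := by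
    apply nonempty_of_measure_ne_zero (μ := volume)
    rw [h2]; exact hSpos
  obtain ⟨x, hx⟩ := hne
  refine ⟨x, hx.1, ?_⟩
  by_contra hc
  exact hx.2 ⟨hc, hSsub hx.1⟩

end PartB
section PartC
open MeasureTheory Filter Set

def tent (lo hi η x : ℝ) : ℝ := max 0 (min 1 (1 + (min (x - lo) (hi - x))/η))

lemma continuous_tent (lo hi η : ℝ) : Continuous (tent lo hi η) := by
  apply continuous_const.max
  apply continuous_const.min
  exact continuous_const.add (((continuous_id.sub continuous_const).min
    (continuous_const.sub continuous_id)).div_const η)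

lemma tent_nonneg (lo hi η x : ℝ) : 0 ≤ tent lo hi η x := le_max_left _ _

lemma tent_le_one (lo hi η x : ℝ) : tent lo hi η x ≤ 1 :=
  max_le (by norm_num) (min_le_left _ _)

lemma tent_eq_one {lo hi η x : ℝ} (hη : 0 < η) (h1 : lo ≤ x) (h2 : x ≤ hi) :
    tent lo hi η x = 1 := by
  have hmin : 0 ≤ min (x - lo) (hi - x) := le_min (by linarith) (by linarith)
  have : (1:ℝ) ≤ 1 + min (x - lo) (hi - x) / η := by
    have : 0 ≤ min (x - lo) (hi - x) / η := div_nonneg hmin hη.le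
    linarith
  rw [tent, min_eq_left this, max_eq_right (by norm_num)]

lemma tent_eq_zero {lo hi η x : ℝ} (hη : 0 < η) (h : x ≤ lo - η ∨ hi + η ≤ x) :
    tent lo hi η x = 0 := by
  have hmin : min (x - lo) (hi - x) ≤ -η := by
    rcases h with h | h
    · exact le_trans (min_le_left _ _) (by linarith)
    · exact le_trans (min_le_right _ _) (by linarith)
  have hdiv : min (x - lo) (hi - x) / η ≤ -1 := by
    rw [div_le_iff₀ hη]; linarith
  rw [tent, max_eq_left]
  exact le_trans (min_le_right _ _) (by linarith)

lemma integrableOn_tent (lo hi η : ℝ) : IntegrableOn (tent lo hi η) (Set.Icc (0:ℝ) 1) :=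
  (continuous_tent lo hi η).continuousOn.integrableOn_Icc

lemma integral_tent_le {lo hi η : ℝ} (hη : 0 < η) (hlohi : lo ≤ hi) :
    ∫ x in Set.Icc (0:ℝ) 1, tent lo hi η x ≤ (hi - lo) + 2*η := by
  set s := Set.Icc (lo - η) (hi + η) with hs
  have hind : ∀ x, tent lo hi η x ≤ s.indicator (fun _ => (1:ℝ)) x := by
    intro x
    by_cases hx : x ∈ s
    · rw [Set.indicator_of_mem hx]; exact tent_le_one _ _ _ _
    · rw [Set.indicator_of_notMem hx]
      have : x < lo - η ∨ hi + η < x := by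
        rcases not_and_or.1 (fun hc => hx ⟨hc.1, hc.2⟩) with h | h
        · exact Or.inl (lt_of_not_ge h)
        · exact Or.inr (lt_of_not_ge h)
      rw [tent_eq_zero hη (this.imp le_of_lt le_of_lt)]
  have hint : IntegrableOn (s.indicator (fun _ => (1:ℝ))) (Set.Icc (0:ℝ) 1) := by
    apply Integrable.indicator _ measurableSet_Icc
    exact integrableOn_const (by rw [Real.volume_Icc]; norm_num)
  calc ∫ x in Set.Icc (0:ℝ) 1, tent lo hi η x
      ≤ ∫ x in Set.Icc (0:ℝ) 1, s.indicator (fun _ => (1:ℝ)) x :=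
        integral_mono (integrableOn_tent lo hi η) hint hind
    _ = ((volume.restrict (Set.Icc (0:ℝ) 1)) s).toReal := by
        rw [MeasureTheory.integral_indicator measurableSet_Icc]; simp; rfl
    _ ≤ (volume s).toReal := by
        apply ENNReal.toReal_mono
        · rw [hs, Real.volume_Icc]; exact ENNReal.ofReal_ne_top
        · exact Measure.restrict_le_self _
    _ = (hi - lo) + 2*η := by
        rw [hs, Real.volume_Icc, ENNReal.toReal_ofReal (by linarith)]; ring
end PartC
section PartD
open MeasureTheory Filter Set


variable {D : Set ℝ} {f : ℝ → ℝ} {A : ℝ}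

lemma cell_sub_Icc {m l : ℕ} (hl : l < 2^m) :
    Set.Ioo ((l : ℝ) / 2^m) (((l : ℝ) + 1) / 2^m) ⊆ Set.Icc (0:ℝ) 1 :=
  fun x hx => cell_subset_Icc hl ⟨hx.1.le, hx.2⟩

/-- relation between cell indices at two depths. -/
lemma didx_parent {m m' : ℕ} (hmm : m ≤ m') (x : ℝ) :
    didx m x = didx m' x / 2^(m'-m) := by
  have h2 : ((2^(m'-m) : ℕ) : ℝ) ≠ 0 := by positivity
  have key : (2:ℝ)^m * x = ((2:ℝ)^m' * x) / ((2^(m'-m) : ℕ) : ℝ) := by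
    rw [eq_div_iff h2]
    push_cast
    rw [mul_comm ((2:ℝ)^m) x, mul_assoc, ← pow_add, Nat.add_sub_cancel' hmm]
    ring
  rw [didx, key, Nat.floor_div_natCast]
  rfl

/-- a depth-`m'` open cell is contained in its parent depth-`m` open cell. -/
lemma cell_mono {m m' l' : ℕ} (hmm : m ≤ m') :
    Set.Ioo ((l' : ℝ) / 2^m') (((l' : ℝ) + 1) / 2^m') ⊆
      Set.Ioo (((l' / 2^(m'-m) : ℕ) : ℝ) / 2^m) ((((l' / 2^(m'-m) : ℕ) : ℝ) + 1) / 2^m) := by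
  set e := m' - m with he
  set l : ℕ := l' / 2^e with hldef
  have hme : m + e = m' := by omega
  have h1 : l * 2^e ≤ l' := by rw [hldef]; exact Nat.div_mul_le_self l' (2^e)
  have h2 : l' + 1 ≤ (l + 1) * 2^e := by
    have hmod : 2^e * l + l' % 2^e = l' := by rw [hldef]; exact Nat.div_add_mod l' (2^e)
    have hlt : l' % 2^e < 2^e := Nat.mod_lt _ (by positivity)
    have hexp : (l + 1) * 2^e = 2^e * l + 2^e := by ring
    omega
  have hpow : (2:ℝ)^m' = 2^m * 2^e := by rw [← pow_add, hme]
  have hL : ((l:ℝ)) / 2^m = ((l * 2^e : ℕ) : ℝ) / 2^m' := by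
    push_cast
    rw [hpow]
    rw [div_eq_div_iff (by positivity) (by positivity)]
    ring
  have hR : (((l:ℝ)) + 1) / 2^m = (((l+1) * 2^e : ℕ) : ℝ) / 2^m' := by
    push_cast
    rw [hpow]
    rw [div_eq_div_iff (by positivity) (by positivity)]
    ring
  intro x hx
  refine ⟨?_, ?_⟩
  · rw [hL]
    refine lt_of_le_of_lt ?_ hx.1
    apply div_le_div_of_nonneg_right ?_ (two_pow_pos m').le |>.trans_eq rfl
    exact_mod_cast h1
  · rw [hR]
    refine lt_of_lt_of_le hx.2 ?_
    apply div_le_div_of_nonneg_right ?_ (two_pow_pos m').le |>.trans_eq rfl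
    exact_mod_cast h2

end PartD
section PartE
open MeasureTheory Filter Set

variable {D : Set ℝ} {f : ℝ → ℝ} {A : ℝ}

lemma isTagSystem_update {m l : ℕ} {ζ : ℕ → ℝ} {y : ℝ}
    (hζ : IsTagSystem D m ζ)
    (hy : y ∈ Set.Ioo ((l : ℝ) / 2^m) (((l : ℝ) + 1) / 2^m) ∩ D) :
    IsTagSystem D m (Function.update ζ l y) := by
  intro l' hl'
  by_cases h : l' = l
  · subst h; rwa [Function.update_self]
  · rw [Function.update_of_ne h]; exact hζ l' hl'

lemma riemannSum_update {m l : ℕ} (hl : l < 2^m) (ζ : ℕ → ℝ) (y : ℝ) :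
    RiemannSum f m (Function.update ζ l y) - RiemannSum f m ζ
      = (1/2:ℝ)^m * (f y - f (ζ l)) := by
  have hfun : ∀ i, (1/2:ℝ)^m * f (Function.update ζ l y i)
      = Function.update (fun i => (1/2:ℝ)^m * f (ζ i)) l ((1/2:ℝ)^m * f y) i := by
    intro i
    by_cases h : i = l
    · subst h; simp
    · simp [Function.update_of_ne h]
  have hmem : l ∈ Finset.range (2^m) := Finset.mem_range.2 hl
  rw [RiemannSum, RiemannSum, Finset.sum_congr rfl (fun i _ => hfun i),
    Finset.sum_update_of_mem hmem, Finset.sdiff_singleton_eq_erase,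
    Finset.sum_erase_eq_sub hmem]
  ring

/-- if all Riemann sums at depth `m` are within `ε` of `A`, then `f` is bounded above and
below on each open cell intersected with `D`, with near-extremal points. -/
lemma exists_near_extrema {m : ℕ} {ε : ℝ} (hε : 0 < ε)
    (hbd : ∀ ζ : ℕ → ℝ, IsTagSystem D m ζ → |RiemannSum f m ζ - A| < ε)
    (ζ : ℕ → ℝ) (hζ : IsTagSystem D m ζ) {l : ℕ} (hl : l < 2^m) :
    ∃ v w : ℝ, v ∈ Set.Ioo ((l : ℝ) / 2^m) (((l : ℝ) + 1) / 2^m) ∩ D ∧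
      w ∈ Set.Ioo ((l : ℝ) / 2^m) (((l : ℝ) + 1) / 2^m) ∩ D ∧
      (∀ y ∈ Set.Ioo ((l : ℝ) / 2^m) (((l : ℝ) + 1) / 2^m) ∩ D, f y ≤ f v + ε) ∧
      (∀ y ∈ Set.Ioo ((l : ℝ) / 2^m) (((l : ℝ) + 1) / 2^m) ∩ D, f w ≤ f y + ε) := by
  set C := Set.Ioo ((l : ℝ) / 2^m) (((l : ℝ) + 1) / 2^m) ∩ D with hC
  have hCne : C.Nonempty := ⟨ζ l, hζ l hl⟩
  have hbound : ∀ y ∈ C, |f y - f (ζ l)| ≤ 2 * ε * 2^m := by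
    intro y hy
    have h1 := hbd _ (isTagSystem_update hζ hy)
    have h2 := hbd ζ hζ
    have h3 := riemannSum_update (f := f) hl ζ y
    have h4 : |(1/2:ℝ)^m * (f y - f (ζ l))| < 2 * ε := by
      rw [← h3]
      have t := abs_sub_le (RiemannSum f m (Function.update ζ l y)) A (RiemannSum f m ζ)
      rw [abs_sub_comm A (RiemannSum f m ζ)] at t
      linarith
    rw [abs_mul, abs_of_pos (by positivity : (0:ℝ) < (1/2:ℝ)^m)] at h4
    have hpow : (1/2:ℝ)^m = ((2:ℝ)^m)⁻¹ := by rw [one_div, inv_pow]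
    rw [hpow] at h4
    have := (inv_mul_lt_iff₀ (two_pow_pos m)).1 (by rwa [mul_comm] at h4)
    nlinarith [two_pow_pos m, abs_nonneg (f y - f (ζ l))]
  have hBddA : BddAbove (f '' C) := by
    refine ⟨f (ζ l) + 2 * ε * 2^m, ?_⟩
    rintro _ ⟨y, hy, rfl⟩
    have := hbound y hy
    have := abs_le.1 this
    linarith [this.2]
  have hBddB : BddBelow (f '' C) := by
    refine ⟨f (ζ l) - 2 * ε * 2^m, ?_⟩
    rintro _ ⟨y, hy, rfl⟩
    have := abs_le.1 (hbound y hy)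
    linarith [this.1]
  have hIne : (f '' C).Nonempty := hCne.image f
  obtain ⟨fv, hfv, hfvlt⟩ := exists_lt_of_lt_csSup hIne
    (show sSup (f '' C) - ε < sSup (f '' C) by linarith)
  obtain ⟨v, hv, rfl⟩ := hfv
  obtain ⟨fw, hfw, hfwlt⟩ := exists_lt_of_csInf_lt hIne
    (show sInf (f '' C) < sInf (f '' C) + ε by linarith)
  obtain ⟨w, hw, rfl⟩ := hfw
  refine ⟨v, w, hv, hw, fun y hy => ?_, fun y hy => ?_⟩
  · have : f y ≤ sSup (f '' C) := le_csSup hBddA ⟨y, hy, rfl⟩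
    linarith
  · have : sInf (f '' C) ≤ f y := csInf_le hBddB ⟨y, hy, rfl⟩
    linarith

/-- the set of dyadic rationals. -/
def DyadicSet : Set ℝ := {x | ∃ n l : ℕ, x = (l : ℝ) / 2^n}

lemma dyadic_countable : DyadicSet.Countable := by
  have : DyadicSet ⊆ Set.range (fun p : ℕ × ℕ => ((p.2 : ℝ) / 2^p.1)) := by
    rintro x ⟨n, l, rfl⟩; exact ⟨(n, l), rfl⟩
  exact (Set.countable_range _).mono this

lemma dyadic_null : volume DyadicSet = 0 := dyadic_countable.measure_zero _

lemma one_mem_dyadic : (1:ℝ) ∈ DyadicSet := ⟨0, 1, by norm_num⟩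

/-- a non-dyadic point of `[0,1]` lies in the open cell of its index. -/
lemma mem_open_cell {m : ℕ} {x : ℝ} (hx : x ∈ Set.Icc (0:ℝ) 1) (hxd : x ∉ DyadicSet) :
    x ∈ Set.Ioo ((didx m x : ℝ) / 2^m) (((didx m x : ℝ) + 1) / 2^m) ∧ didx m x < 2^m := by
  have hx1 : x < 1 := lt_of_le_of_ne hx.2 (fun h => hxd (h ▸ one_mem_dyadic))
  have hlt := didx_lt m hx.1 hx1
  refine ⟨⟨?_, lt_didx_succ m x⟩, hlt⟩
  rcases lt_or_eq_of_le (didx_le m hx.1) with h | h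
  · exact h
  · exact absurd ⟨m, didx m x, h.symm⟩ hxd

end PartE
section PartF
open MeasureTheory Filter Set


theorem auxMain (D : Set ℝ) (hD : D ⊆ Set.Icc 0 1)
    (hfull : ∃ h : ℕ → ℝ → ℝ, RegularSeq h ∧ Omega h ⊆ D)
    (f : ℝ → ℝ) (A : ℝ)
    (hf : ∀ ε > (0:ℝ), ∃ M : ℕ, ∀ m ≥ M, ∀ ζ : ℕ → ℝ, IsTagSystem D m ζ →
      |RiemannSum f m ζ - A| < ε) :
    ∃ g : ℝ → ℝ, IntegrableOn g (Set.Icc 0 1) volume ∧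
      (∫ x in Set.Icc (0:ℝ) 1, g x) = A ∧
      AlmostFull {x ∈ D | f x = g x} ∧
      volume {x ∈ D | f x = g x} = 1 := by
  classical
  obtain ⟨h0, hh0, hΩD⟩ := hfull
  -- each open dyadic cell meets D
  have hne : ∀ m l : ℕ, l < 2^m →
      (Set.Ioo ((l:ℝ)/2^m) (((l:ℝ)+1)/2^m) ∩ D).Nonempty := by
    intro m l hl
    have hpos : volume (Set.Ioo ((l:ℝ)/2^m) (((l:ℝ)+1)/2^m)) ≠ 0 := by
      rw [Real.volume_Ioo, cell_len m l]
      simp only [ne_eq, ENNReal.ofReal_eq_zero, not_le]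
      positivity
    obtain ⟨x, hx1, hx2⟩ := omega_meets hh0 measurableSet_Ioo (cell_sub_Icc hl) hpos
    exact ⟨x, hx1, hΩD hx2⟩
  -- tag system chooser
  have hZex : ∀ m : ℕ, ∃ ζ : ℕ → ℝ, IsTagSystem D m ζ := by
    intro m
    have hz : ∀ l : ℕ, ∃ z : ℝ,
        (l < 2^m → z ∈ Set.Ioo ((l:ℝ)/2^m) (((l:ℝ)+1)/2^m) ∩ D) := by
      intro l
      by_cases hl : l < 2^m
      · obtain ⟨z, hzz⟩ := hne m l hl; exact ⟨z, fun _ => hzz⟩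
      · exact ⟨0, fun hc => absurd hc hl⟩
    choose ζ hζ using hz
    exact ⟨ζ, fun l hl => hζ l hl⟩
  choose Z hZ using hZex
  -- accuracy scales and depths
  set eps : ℕ → ℝ := fun k => (1/2:ℝ)^(k+5) with heps
  have heps_pos : ∀ k, 0 < eps k := fun k => by positivity
  choose MM hMM using fun k : ℕ => hf (eps k) (heps_pos k)
  set ms : ℕ → ℕ := fun k => (Finset.range (k+1)).sup MM with hmsdef
  have hms_ge : ∀ k, MM k ≤ ms k := fun k => Finset.le_sup (Finset.self_mem_range_succ k)
  have hms_mono : Monotone ms := fun a b hab =>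
    Finset.sup_mono (Finset.range_subset_range.2 (by omega))
  have hRS : ∀ k (ζ : ℕ → ℝ), IsTagSystem D (ms k) ζ →
      |RiemannSum f (ms k) ζ - A| < eps k := fun k ζ hζ => hMM k (ms k) (hms_ge k) ζ hζ
  -- near-extremal tags
  have hVWex : ∀ k l : ℕ, ∃ vw : ℝ × ℝ, (l < 2^(ms k) →
      vw.1 ∈ Set.Ioo ((l:ℝ)/2^(ms k)) (((l:ℝ)+1)/2^(ms k)) ∩ D ∧
      vw.2 ∈ Set.Ioo ((l:ℝ)/2^(ms k)) (((l:ℝ)+1)/2^(ms k)) ∩ D ∧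
      (∀ y ∈ Set.Ioo ((l:ℝ)/2^(ms k)) (((l:ℝ)+1)/2^(ms k)) ∩ D, f y ≤ f vw.1 + eps k) ∧
      (∀ y ∈ Set.Ioo ((l:ℝ)/2^(ms k)) (((l:ℝ)+1)/2^(ms k)) ∩ D, f vw.2 ≤ f y + eps k)) := by
    intro k l
    by_cases hl : l < 2^(ms k)
    · obtain ⟨v, w, hv, hw, hvp, hwp⟩ :=
        exists_near_extrema (A := A) (heps_pos k) (hRS k) (Z (ms k)) (hZ (ms k)) hl
      exact ⟨(v, w), fun _ => ⟨hv, hw, hvp, hwp⟩⟩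
    · exact ⟨(0, 0), fun hc => absurd hc hl⟩
  choose VW hVW using hVWex
  set V : ℕ → ℕ → ℝ := fun k l => (VW k l).1 with hVdef
  set W : ℕ → ℕ → ℝ := fun k l => (VW k l).2 with hWdef
  -- step functions
  set avals : ℕ → ℕ → ℝ := fun k l => f (V k l) - f (W k l) + 2 * eps k with havals
  set t : ℕ → ℝ → ℝ := fun k => stepf (ms k) (fun l => f (Z (ms k) l)) with htdef
  set o : ℕ → ℝ → ℝ := fun k => stepf (ms k) (avals k) with hodef
  -- tag systems
  have hVtag : ∀ k, IsTagSystem D (ms k) (V k) := fun k l hl => (hVW k l hl).1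
  have hWtag : ∀ k, IsTagSystem D (ms k) (W k) := fun k l hl => (hVW k l hl).2.1
  -- (H1) positivity of avals
  have havals_pos : ∀ k l, l < 2^(ms k) → eps k ≤ avals k l := by
    intro k l hl
    have := (hVW k l hl).2.2.2 (V k l) (hVW k l hl).1
    simp only [havals]
    linarith
  -- (F1) nonnegativity of o on Ico
  have hF1 : ∀ k, ∀ x ∈ Set.Ico (0:ℝ) 1, 0 ≤ o k x := by
    intro k x hx
    exact le_trans (heps_pos k).le (havals_pos k _ (didx_lt (ms k) hx.1 hx.2))
  -- (F2) successive differences bounded by o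
  have hF2 : ∀ k, ∀ x ∈ Set.Ico (0:ℝ) 1, |t (k+1) x - t k x| ≤ o k x := by
    intro k x hx
    set m := ms k
    set m' := ms (k+1)
    have hmm : m ≤ m' := hms_mono (Nat.le_succ k)
    set l' := didx m' x with hl'def
    set l := didx m x with hldef
    have hl' : l' < 2^m' := didx_lt m' hx.1 hx.2
    have hl : l < 2^m := didx_lt m hx.1 hx.2
    have hrel : l = l' / 2^(m'-m) := didx_parent hmm x
    have hzc : Z m' l' ∈ Set.Ioo ((l:ℝ)/2^m) (((l:ℝ)+1)/2^m) ∩ D := by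
      have hmem := hZ m' l' hl'
      exact ⟨by rw [hrel]; exact cell_mono hmm hmem.1, hmem.2⟩
    have hzp : Z m l ∈ Set.Ioo ((l:ℝ)/2^m) (((l:ℝ)+1)/2^m) ∩ D := hZ m l hl
    have h1 := (hVW k l hl).2.2.1 _ hzc
    have h2 := (hVW k l hl).2.2.2 _ hzc
    have h3 := (hVW k l hl).2.2.1 _ hzp
    have h4 := (hVW k l hl).2.2.2 _ hzp
    have : t (k+1) x = f (Z m' l') := rfl
    have : t k x = f (Z m l) := rfl
    rw [abs_le]
    constructor
    · show -(o k x) ≤ t (k+1) x - t k x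
      have ho : o k x = avals k l := rfl
      rw [ho]
      simp only [havals]
      linarith
    · show t (k+1) x - t k x ≤ o k x
      have ho : o k x = avals k l := rfl
      rw [ho]; simp only [havals]; linarith
  -- (F3) distance from f on D off dyadics
  have hF3 : ∀ k, ∀ x, x ∈ D → x ∉ DyadicSet → |f x - t k x| ≤ o k x := by
    intro k x hxD hxQ
    obtain ⟨hxIoo, hxlt⟩ := mem_open_cell (m := ms k) (hD hxD) hxQ
    set l := didx (ms k) x
    have hzp : Z (ms k) l ∈ _ ∩ D := hZ (ms k) l hxlt
    have h1 := (hVW k l hxlt).2.2.1 x ⟨hxIoo, hxD⟩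
    have h2 := (hVW k l hxlt).2.2.2 x ⟨hxIoo, hxD⟩
    have h3 := (hVW k l hxlt).2.2.1 _ hzp
    have h4 := (hVW k l hxlt).2.2.2 _ hzp
    have ho : o k x = avals k l := rfl
    have ht : t k x = f (Z (ms k) l) := rfl
    rw [abs_le, ho, ht]
    constructor <;> simp only [havals] <;> linarith
  -- (I1) integral of t is the Riemann sum
  have hI1 : ∀ k, ∫ x in Set.Icc (0:ℝ) 1, t k x = RiemannSum f (ms k) (Z (ms k)) := by
    intro k
    exact integral_stepf (ms k) _
  -- (I2) integral of the oscillation step function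
  have hsplit : ∀ k, ∑ l ∈ Finset.range (2^(ms k)), (1/2:ℝ)^(ms k) * avals k l
      = RiemannSum f (ms k) (V k) - RiemannSum f (ms k) (W k) + 2 * eps k := by
    intro k
    have hone : ((2:ℝ)^(ms k)) * (1/2:ℝ)^(ms k) = 1 := by
      rw [one_div, inv_pow, mul_inv_cancel₀ (by positivity)]
    simp only [havals, RiemannSum]
    have hterm : ∀ l, (1/2:ℝ)^(ms k) * (f (V k l) - f (W k l) + 2*eps k)
        = (1/2:ℝ)^(ms k) * f (V k l) - (1/2:ℝ)^(ms k) * f (W k l)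
          + (1/2:ℝ)^(ms k) * (2*eps k) := fun l => by ring
    rw [Finset.sum_congr rfl fun l _ => hterm l]
    rw [Finset.sum_add_distrib, Finset.sum_sub_distrib, Finset.sum_const,
      Finset.card_range, nsmul_eq_mul]
    push_cast
    linear_combination (2 * eps k) * hone
  have hoscsum : ∀ k, ∑ l ∈ Finset.range (2^(ms k)), (1/2:ℝ)^(ms k) * avals k l < 4 * eps k := by
    intro k
    have hv := abs_lt.1 (hRS k (V k) (hVtag k))
    have hw := abs_lt.1 (hRS k (W k) (hWtag k))
    rw [hsplit k]
    linarith [hv.1, hv.2, hw.1, hw.2]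
  have hI2 : ∀ k, ∫ x in Set.Icc (0:ℝ) 1, o k x < 4 * eps k := by
    intro k
    have : ∫ x in Set.Icc (0:ℝ) 1, o k x
        = ∑ l ∈ Finset.range (2^(ms k)), (1/2:ℝ)^(ms k) * avals k l :=
      integral_stepf (ms k) (avals k)
    rw [this]
    exact hoscsum k
  set μ := volume.restrict (Set.Icc (0:ℝ) 1) with hμdef
  have hInt_o : ∀ k, IntegrableOn (o k) (Set.Icc (0:ℝ) 1) := fun k => integrableOn_stepf _ _
  have hae_Ico : ∀ᵐ x ∂μ, x ∈ Set.Ico (0:ℝ) 1 := by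
    have hmem : ∀ᵐ x ∂μ, x ∈ Set.Icc (0:ℝ) 1 := ae_restrict_mem measurableSet_Icc
    have h1 : μ {x : ℝ | ¬ x ≠ 1} = 0 := by
      have : {x : ℝ | ¬ x ≠ 1} = {(1:ℝ)} := by ext y; simp
      rw [this]
      exact le_antisymm (le_trans (Measure.restrict_le_self _)
        (by rw [Real.volume_singleton])) (zero_le)
    have hne1 : ∀ᵐ x ∂μ, x ≠ 1 := h1
    filter_upwards [hmem, hne1] with x hx h2 using ⟨hx.1, lt_of_le_of_ne hx.2 h2⟩
  have hlint_o : ∀ k, ∫⁻ x, ENNReal.ofReal (o k x) ∂μ ≤ ENNReal.ofReal (4 * eps k) := by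
    intro k
    rw [← ofReal_integral_eq_lintegral_ofReal (hInt_o k)
      (by filter_upwards [hae_Ico] with x hx using hF1 k x hx)]
    exact ENNReal.ofReal_le_ofReal (hI2 k).le
  have hmeas_o : ∀ k : ℕ, AEMeasurable (fun x => ENNReal.ofReal (o k x)) μ := fun k =>
    (ENNReal.measurable_ofReal.comp (measurable_stepf _ _)).aemeasurable
  have hsumeps : Summable (fun k : ℕ => 4 * eps k) := by
    simp only [heps]
    have : Summable (fun k : ℕ => (1/2:ℝ)^k) :=
      summable_geometric_of_lt_one (by norm_num) (by norm_num)
    exact ((this.mul_left ((1/2:ℝ)^5)).congr (fun k => by rw [pow_add]; ring)).mul_left 4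
  have hlint_sum : ∫⁻ x, ∑' k, ENNReal.ofReal (o k x) ∂μ < ⊤ := by
    rw [lintegral_tsum hmeas_o]
    calc ∑' k, ∫⁻ x, ENNReal.ofReal (o k x) ∂μ
        ≤ ∑' k, ENNReal.ofReal (4 * eps k) := ENNReal.tsum_le_tsum hlint_o
      _ = ENNReal.ofReal (∑' k, 4 * eps k) :=
          (ENNReal.ofReal_tsum_of_nonneg (fun k => by positivity) hsumeps).symm
      _ < ⊤ := ENNReal.ofReal_lt_top
  have hfin : ∀ᵐ x ∂μ, (∑' k, ENNReal.ofReal (o k x)) < ⊤ :=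
    ae_lt_top' (AEMeasurable.ennreal_tsum hmeas_o) hlint_sum.ne
  have hsummable : ∀ᵐ x ∂μ, Summable (fun k => o k x) := by
    filter_upwards [hfin, hae_Ico] with x hx hxI
    have h2 : Summable (fun k => (o k x).toNNReal) :=
      ENNReal.tsum_coe_ne_top_iff_summable.1 (by
        have : ∀ k, ((o k x).toNNReal : ENNReal) = ENNReal.ofReal (o k x) := fun k => rfl
        rw [tsum_congr this]; exact hx.ne)
    exact (NNReal.summable_coe.2 h2).congr fun k => Real.coe_toNNReal _ (hF1 k x hxI)
  have hcauchy : ∀ᵐ x ∂μ, ∃ c : ℝ, Tendsto (fun k => t k x) atTop (nhds c) := by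
    filter_upwards [hsummable, hae_Ico] with x hsum hxI
    have hdist : Summable (fun k => dist (t k x) (t (k+1) x)) := by
      refine Summable.of_nonneg_of_le (fun k => dist_nonneg) (fun k => ?_) hsum
      rw [Real.dist_eq, abs_sub_comm]
      exact hF2 k x hxI
    exact cauchySeq_tendsto_of_complete (cauchySeq_of_summable_dist hdist)
  set L : ℝ → ℝ := fun x => limUnder atTop (fun k => t k x) with hLdef
  have htendL : ∀ᵐ x ∂μ, Tendsto (fun k => t k x) atTop (nhds (L x)) := by
    filter_upwards [hcauchy] with x hx using tendsto_nhds_limUnder hx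
  have hAESM_t : ∀ k, AEStronglyMeasurable (t k) μ := fun k =>
    (measurable_stepf _ _).aestronglyMeasurable
  have hAESM_L : AEStronglyMeasurable L μ :=
    aestronglyMeasurable_of_tendsto_ae atTop hAESM_t htendL
  set CC : ℝ → ℝ := fun x => |t 0 x| + (∑' k, ENNReal.ofReal (o k x)).toReal with hCdef
  have hboundC : ∀ᵐ x ∂μ, ∀ k, |t k x| ≤ CC x := by
    filter_upwards [hsummable, hfin, hae_Ico] with x hsum hxfin hxI
    intro k
    have htel : |t k x| ≤ |t 0 x| + ∑ j ∈ Finset.range k, o j x := by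
      induction k with
      | zero => simp
      | succ n ih =>
        have hstep : |t (n+1) x| ≤ |t n x| + |t (n+1) x - t n x| := by
          have h := abs_add_le (t n x) (t (n+1) x - t n x)
          simpa using h
        calc |t (n+1) x| ≤ |t n x| + |t (n+1) x - t n x| := hstep
          _ ≤ (|t 0 x| + ∑ j ∈ Finset.range n, o j x) + o n x := add_le_add ih (hF2 n x hxI)
          _ = |t 0 x| + ∑ j ∈ Finset.range (n+1), o j x := by
              rw [Finset.sum_range_succ]; ring
    have hsumle : ∑ j ∈ Finset.range k, o j x ≤ (∑' j, ENNReal.ofReal (o j x)).toReal := by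
      have h1 : ∑ j ∈ Finset.range k, o j x ≤ ∑' j, o j x :=
        Summable.sum_le_tsum _ (fun j _ => hF1 j x hxI) hsum
      have h2 : ∑' j, o j x = (∑' j, ENNReal.ofReal (o j x)).toReal := by
        rw [← ENNReal.ofReal_tsum_of_nonneg (fun j => hF1 j x hxI) hsum,
          ENNReal.toReal_ofReal (tsum_nonneg fun j => hF1 j x hxI)]
      linarith
    calc |t k x| ≤ |t 0 x| + ∑ j ∈ Finset.range k, o j x := htel
      _ ≤ CC x := by rw [hCdef]; dsimp only; linarith
  have hIntC : Integrable CC μ := by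
    refine Integrable.add ?_ ?_
    · exact (integrableOn_stepf (ms 0) _).abs
    · exact integrable_toReal_of_lintegral_ne_top (AEMeasurable.ennreal_tsum hmeas_o) hlint_sum.ne
  have hIntL : IntegrableOn L (Set.Icc (0:ℝ) 1) := by
    refine Integrable.mono' hIntC hAESM_L ?_
    filter_upwards [hboundC, htendL] with x hb ht
    rw [Real.norm_eq_abs]
    exact le_of_tendsto ht.abs (Filter.Eventually.of_forall hb)
  have hepsto : Tendsto eps atTop (nhds 0) := by
    have h2 : Tendsto (fun k : ℕ => (1/2:ℝ)^k) atTop (nhds 0) :=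
      tendsto_pow_atTop_nhds_zero_of_lt_one (by norm_num) (by norm_num)
    have := h2.const_mul ((1/2:ℝ)^5)
    rw [mul_zero] at this
    exact this.congr (fun k => by rw [heps]; dsimp only; rw [pow_add]; ring)
  have hRA : Tendsto (fun k => RiemannSum f (ms k) (Z (ms k))) atTop (nhds A) := by
    rw [tendsto_iff_dist_tendsto_zero]
    refine squeeze_zero (fun k => dist_nonneg) (fun k => ?_) hepsto
    rw [Real.dist_eq]
    exact (hRS k (Z (ms k)) (hZ (ms k))).le
  have hA : ∫ x in Set.Icc (0:ℝ) 1, L x = A := by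
    have hconv := tendsto_integral_of_dominated_convergence CC hAESM_t hIntC
      (fun k => by filter_upwards [hboundC] with x hx using (Real.norm_eq_abs _).le.trans (hx k))
      htendL
    have hconv2 : Tendsto (fun k => RiemannSum f (ms k) (Z (ms k))) atTop
        (nhds (∫ x, L x ∂μ)) := hconv.congr (fun k => hI1 k)
    exact tendsto_nhds_unique hconv2 hRA
  -- definition of g
  set g : ℝ → ℝ := fun x => if x ∈ DyadicSet then f x else L x with hgdef
  have hμQ : μ DyadicSet = 0 := by
    rw [hμdef, Measure.restrict_apply' measurableSet_Icc]
    exact measure_mono_null Set.inter_subset_left dyadic_null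
  have hgL : g =ᵐ[μ] L := by
    rw [Filter.EventuallyEq, ae_iff]
    refine measure_mono_null ?_ hμQ
    intro x hx
    by_contra hxQ
    exact hx (by show (if x ∈ DyadicSet then f x else L x) = L x; rw [if_neg hxQ])
  have hIntg : IntegrableOn g (Set.Icc (0:ℝ) 1) := hIntL.congr hgL.symm
  have hgA : ∫ x in Set.Icc (0:ℝ) 1, g x = A := by
    rw [integral_congr_ae hgL]; exact hA
  -- tent majorants of the oscillation step functions
  set Sk : ℕ → ℝ := fun k => ∑ l ∈ Finset.range (2^(ms k)), avals k l with hSkdef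
  have havals_nonneg : ∀ k, ∀ l ∈ Finset.range (2^(ms k)), 0 ≤ avals k l := fun k l hl =>
    le_trans (heps_pos k).le (havals_pos k l (Finset.mem_range.1 hl))
  have hSk_nonneg : ∀ k, 0 ≤ Sk k := fun k => Finset.sum_nonneg (havals_nonneg k)
  set eta : ℕ → ℝ := fun k => eps k / (2 * Sk k + 1) with hetadef
  have heta_pos : ∀ k, 0 < eta k := fun k =>
    div_pos (heps_pos k) (by linarith [hSk_nonneg k])
  set hhat : ℕ → ℝ → ℝ := fun k x => ∑ l ∈ Finset.range (2^(ms k)),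
    avals k l * tent ((l:ℝ)/2^(ms k)) (((l:ℝ)+1)/2^(ms k)) (eta k) x with hhhatdef
  have hhat_cont : ∀ k, Continuous (hhat k) := fun k =>
    continuous_finset_sum _ (fun l _ => continuous_const.mul (continuous_tent _ _ _))
  have hhat_nonneg : ∀ k x, 0 ≤ hhat k x := fun k x =>
    Finset.sum_nonneg fun l hl => mul_nonneg (havals_nonneg k l hl) (tent_nonneg _ _ _ _)
  have hhat_ge : ∀ k, ∀ x ∈ Set.Ico (0:ℝ) 1, o k x ≤ hhat k x := by
    intro k x hx
    have hl : didx (ms k) x < 2^(ms k) := didx_lt _ hx.1 hx.2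
    have hmem : didx (ms k) x ∈ Finset.range (2^(ms k)) := Finset.mem_range.2 hl
    have hox : o k x = avals k (didx (ms k) x)
        * tent ((didx (ms k) x : ℝ)/2^(ms k)) (((didx (ms k) x : ℝ)+1)/2^(ms k)) (eta k) x := by
      rw [tent_eq_one (heta_pos k) (didx_le _ hx.1) (lt_didx_succ _ x).le, mul_one]
      rfl
    rw [hox]
    show _ ≤ ∑ l ∈ Finset.range (2^(ms k)),
      avals k l * tent ((l:ℝ)/2^(ms k)) (((l:ℝ)+1)/2^(ms k)) (eta k) x
    exact Finset.single_le_sum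
      (f := fun l => avals k l * tent ((l:ℝ)/2^(ms k)) (((l:ℝ)+1)/2^(ms k)) (eta k) x)
      (fun l hlm => mul_nonneg (havals_nonneg k l hlm) (tent_nonneg _ _ _ _)) hmem
  have hhat_int : ∀ k, ∫ x in Set.Icc (0:ℝ) 1, hhat k x < (1/2:ℝ)^(k+2) := by
    intro k
    have hint_each : ∀ l ∈ Finset.range (2^(ms k)),
        IntegrableOn (fun x => avals k l
          * tent ((l:ℝ)/2^(ms k)) (((l:ℝ)+1)/2^(ms k)) (eta k) x) (Set.Icc (0:ℝ) 1) :=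
      fun l _ => (integrableOn_tent _ _ _).const_mul _
    have hsum : ∫ x in Set.Icc (0:ℝ) 1, hhat k x = ∑ l ∈ Finset.range (2^(ms k)),
        avals k l * ∫ x in Set.Icc (0:ℝ) 1,
          tent ((l:ℝ)/2^(ms k)) (((l:ℝ)+1)/2^(ms k)) (eta k) x := by
      rw [integral_finset_sum _ hint_each]
      exact Finset.sum_congr rfl fun l _ => MeasureTheory.integral_const_mul _ _
    have hboundl : ∀ l ∈ Finset.range (2^(ms k)),
        avals k l * ∫ x in Set.Icc (0:ℝ) 1,
          tent ((l:ℝ)/2^(ms k)) (((l:ℝ)+1)/2^(ms k)) (eta k) x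
        ≤ avals k l * ((1/2:ℝ)^(ms k) + 2 * eta k) := by
      intro l hl
      apply mul_le_mul_of_nonneg_left _ (havals_nonneg k l hl)
      have hlohi : (l:ℝ)/2^(ms k) ≤ ((l:ℝ)+1)/2^(ms k) :=
        div_le_div_of_nonneg_right (by linarith) (two_pow_pos _).le
      have := integral_tent_le (heta_pos k) hlohi
      calc ∫ x in Set.Icc (0:ℝ) 1, tent ((l:ℝ)/2^(ms k)) (((l:ℝ)+1)/2^(ms k)) (eta k) x
          ≤ (((l:ℝ)+1)/2^(ms k) - (l:ℝ)/2^(ms k)) + 2 * eta k := this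
        _ = (1/2:ℝ)^(ms k) + 2 * eta k := by rw [cell_len]
    have hetaS : 2 * eta k * Sk k ≤ eps k := by
      have h21 : (0:ℝ) < 2 * Sk k + 1 := by linarith [hSk_nonneg k]
      have heq : eta k * (2 * Sk k + 1) = eps k := by
        rw [hetadef]; exact div_mul_cancel₀ _ (ne_of_gt h21)
      nlinarith [heta_pos k, hSk_nonneg k]
    calc ∫ x in Set.Icc (0:ℝ) 1, hhat k x
        ≤ ∑ l ∈ Finset.range (2^(ms k)), avals k l * ((1/2:ℝ)^(ms k) + 2 * eta k) := by
          rw [hsum]; exact Finset.sum_le_sum hboundl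
      _ = ∑ l ∈ Finset.range (2^(ms k)), (1/2:ℝ)^(ms k) * avals k l + 2 * eta k * Sk k := by
          have hexp : ∀ l, avals k l * ((1/2:ℝ)^(ms k) + 2 * eta k)
              = (1/2:ℝ)^(ms k) * avals k l + avals k l * (2 * eta k) := fun l => by ring
          rw [Finset.sum_congr rfl fun l _ => hexp l, Finset.sum_add_distrib, ← Finset.sum_mul]
          rw [hSkdef]
          ring
      _ < 4 * eps k + eps k := by
          have := hoscsum k
          linarith [hetaS]
      _ ≤ (1/2:ℝ)^(k+2) := by
          simp only [heps]
          have hp : (0:ℝ) < (1/2:ℝ)^k := by positivity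
          have e1 : (1/2:ℝ)^(k+5) = (1/2:ℝ)^k * (1/32) := by rw [pow_add]; norm_num
          have e2 : (1/2:ℝ)^(k+2) = (1/2:ℝ)^k * (1/4) := by rw [pow_add]; norm_num
          rw [e1, e2]
          nlinarith
  -- the combined regular sequence
  set hnew : ℕ → ℝ → ℝ := fun n x => h0 (n+2) x + hhat (n+1) x with hhnewdef
  have hreg : RegularSeq hnew := by
    intro n
    refine ⟨(hh0 (n+2)).1.add (hhat_cont (n+1)).continuousOn,
      fun x hx => add_nonneg ((hh0 (n+2)).2.1 x hx) (hhat_nonneg _ x), ?_⟩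
    have hii1 : IntervalIntegrable (h0 (n+2)) volume 0 1 := by
      apply ContinuousOn.intervalIntegrable
      rw [Set.uIcc_of_le (by norm_num : (0:ℝ) ≤ 1)]
      exact (hh0 (n+2)).1
    have hii2 : IntervalIntegrable (hhat (n+1)) volume 0 1 :=
      (hhat_cont (n+1)).intervalIntegrable _ _
    have hb1 : ∫ x in (0:ℝ)..1, h0 (n+2) x < (1/2:ℝ)^(n+2) := (hh0 (n+2)).2.2
    have hb2 : ∫ x in (0:ℝ)..1, hhat (n+1) x < (1/2:ℝ)^(n+3) := by
      rw [intervalIntegral.integral_of_le (by norm_num : (0:ℝ) ≤ 1),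
        ← integral_Icc_eq_integral_Ioc]
      exact hhat_int (n+1)
    have hcomb : ∫ x in (0:ℝ)..1, hnew n x
        = (∫ x in (0:ℝ)..1, h0 (n+2) x) + ∫ x in (0:ℝ)..1, hhat (n+1) x :=
      intervalIntegral.integral_add hii1 hii2
    rw [hcomb]
    have hp : (0:ℝ) < (1/2:ℝ)^n := by positivity
    have e1 : (1/2:ℝ)^(n+2) = (1/2:ℝ)^n * (1/4) := by rw [pow_add]; norm_num
    have e2 : (1/2:ℝ)^(n+3) = (1/2:ℝ)^n * (1/8) := by rw [pow_add]; norm_num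
    rw [e1] at hb1
    rw [e2] at hb2
    linarith
  -- Omega hnew is contained in the agreement set
  have hsub : Omega hnew ⊆ {x ∈ D | f x = g x} := by
    rintro x ⟨hxIcc, γ, hγ⟩
    have h0γ : 0 ≤ γ := by
      have h00 : 0 ≤ hnew 0 x := add_nonneg ((hh0 2).2.1 x hxIcc) (hhat_nonneg 1 x)
      have hg0 := hγ 0
      have hsum1 : ∑ n ∈ Finset.range (0+1), hnew n x = hnew 0 x := by norm_num
      rw [hsum1] at hg0
      linarith
    have hγparts : ∀ N, ∑ n ∈ Finset.range N, hnew n x ≤ γ := by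
      intro N
      cases N with
      | zero => simpa using h0γ
      | succ n => exact hγ n
    have hxD : x ∈ D := by
      apply hΩD
      refine ⟨hxIcc, h0 0 x + h0 1 x + γ, fun M => ?_⟩
      rcases M with _ | M'
      · have hsum1 : ∑ n ∈ Finset.range (0+1), h0 n x = h0 0 x := by norm_num
        rw [hsum1]
        have h1 : 0 ≤ h0 1 x := (hh0 1).2.1 x hxIcc
        linarith
      · rw [Finset.sum_range_succ' (fun n => h0 n x) (M'+1),
          Finset.sum_range_succ' (fun n => h0 (n+1) x) M']
        have hle : ∑ n ∈ Finset.range M', h0 (n+2) x ≤ ∑ n ∈ Finset.range M', hnew n x :=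
          Finset.sum_le_sum (fun n _ => le_add_of_nonneg_right (hhat_nonneg (n+1) x))
        have := hγparts M'
        linarith
    have hsumh : Summable (fun k => hhat (k+1) x) := by
      apply summable_of_sum_range_le (fun k => hhat_nonneg _ x) (c := γ)
      intro K
      have hle : ∑ k ∈ Finset.range K, hhat (k+1) x ≤ ∑ k ∈ Finset.range K, hnew k x :=
        Finset.sum_le_sum fun k _ => le_add_of_nonneg_left ((hh0 (k+2)).2.1 x hxIcc)
      linarith [hγparts K]
    refine ⟨hxD, ?_⟩
    by_cases hxQ : x ∈ DyadicSet
    · show f x = if x ∈ DyadicSet then f x else L x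
      rw [if_pos hxQ]
    · have hxI : x ∈ Set.Ico (0:ℝ) 1 :=
        ⟨hxIcc.1, lt_of_le_of_ne hxIcc.2 (fun h => hxQ (h ▸ one_mem_dyadic))⟩
      have h0' : Tendsto (fun k => hhat (k+1) x) atTop (nhds 0) := hsumh.tendsto_atTop_zero
      have habs : Tendsto (fun k => |f x - t (k+1) x|) atTop (nhds 0) :=
        squeeze_zero (fun k => abs_nonneg _)
          (fun k => (hF3 (k+1) x hxD hxQ).trans (hhat_ge (k+1) x hxI)) h0'
      have hshift : Tendsto (fun k => t (k+1) x) atTop (nhds (f x)) := by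
        rw [tendsto_iff_dist_tendsto_zero]
        exact habs.congr (fun k => by rw [Real.dist_eq, abs_sub_comm])
      have hten : Tendsto (fun k => t k x) atTop (nhds (f x)) :=
        (tendsto_add_atTop_iff_nat 1).1 hshift
      show f x = if x ∈ DyadicSet then f x else L x
      rw [if_neg hxQ]
      exact (hten.limUnder_eq).symm
  -- assemble the result
  refine ⟨g, hIntg, hgA, ⟨hnew, hreg, hsub⟩, ?_⟩
  refine le_antisymm ?_ (volume_ge_of_omega_subset hreg hsub)
  calc volume {x ∈ D | f x = g x} ≤ volume (Set.Icc (0:ℝ) 1) :=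
        measure_mono (fun x hx => hD hx.1)
    _ = 1 := by rw [Real.volume_Icc]; norm_num
end PartF

/-- Main theorem, measure-theoretic form: a tag-Riemann integrable `f` on an almost full
set `D` agrees on an almost full set (of full Lebesgue outer measure) with a Lebesgue
integrable function `g` whose Lebesgue integral over `[0,1]` equals `A`. -/
theorem stmt18 (D : Set ℝ) (hD : D ⊆ Set.Icc 0 1) (hfull : AlmostFull D)
    (f : ℝ → ℝ) (A : ℝ) (hf : TagRiemannIntegrable D f A) :
    ∃ g : ℝ → ℝ, IntegrableOn g (Set.Icc 0 1) volume ∧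
      (∫ x in Set.Icc (0:ℝ) 1, g x) = A ∧
      AlmostFull {x ∈ D | f x = g x} ∧
      volume {x ∈ D | f x = g x} = 1 :=
  auxMain D hD hfull f A hf
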